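/- Let 𝓕 be a finite system of nonempty subsets of [n] and G = KG(𝓕) its Kneser graph. (a) The map sending each vertex B′ ⊎ B″ of B_S(𝓕) to {F ∈ 𝓕 : F ⊆ B′} ⊎ {F ∈ 𝓕 : F ⊆ B″} (a nonempty simplex of B₀(G)) is a simplicial ℤ₂-map B_S(𝓕) → sd B₀(G). (b) The map sending each vertex A′ ⊎ A″ of sd B₀(G) (a nonempty simplex of B₀(G)) to (⋃A′) ⊎ (⋃A″) is a simplicial ℤ₂-map sd B₀(G) → B_S(𝓕). -/

import Mathlib

/-!
Both maps are monotone with respect to inclusion and commute with the swap of the two shores,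
so they send chains to chains equivariantly; what remains is to check single vertices. For a
disjoint pair `B' ⊎ B''`, every member of `𝓕` inside `B'` is disjoint from every member inside
`B''`, so the two families are completely joined in `KG(𝓕)`; they are themselves disjoint
because members of `𝓕` are nonempty. Conversely, in a simplex of `B₀(KG(𝓕))` each member on one side is
disjoint from each member on the other, so the two unions are disjoint subsets of `[n]`; a
nonempty simplex has a member of `𝓕` on some side, and it lies in that side's union.
-/

open Finset

attribute [local instance] Classical.propDecidable

noncomputable section

variable {V : Type*}

/-- The set `CN(A)` of common neighbors of `A` in `G` (so `CN(∅) = V`). -/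
def CN [Fintype V] (G : SimpleGraph V) (A : Finset V) : Finset V :=
  Finset.univ.filter fun v => ∀ a ∈ A, G.Adj a v

/-- The shore of `S ⊆ V × {1,2}` lying over `b` (with `false` for the first copy of `V`
and `true` for the second). -/
def shore (S : Finset (V × Bool)) (b : Bool) : Finset V :=
  (S.filter fun p => p.2 = b).image Prod.fst

/-- `A' ⊎ A'' := (A' × {1}) ∪ (A'' × {2})`, with `false` for `1` and `true` for `2`. -/
def joinPair (A' A'' : Finset V) : Finset (V × Bool) :=
  A'.image (fun v => (v, false)) ∪ A''.image (fun v => (v, true))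

/-- The ℤ₂-action on subsets of `V × {1,2}`: interchange the two copies of `V`,
i.e. `A' ⊎ A'' ↦ A'' ⊎ A'`. -/
def swapFinset (S : Finset (V × Bool)) : Finset (V × Bool) :=
  S.image fun p => (p.1, !p.2)

/-- `G[A', A'']` is complete: every vertex of `A'` is adjacent to every vertex of `A''`. -/
def IsCompleteBip (G : SimpleGraph V) (A' A'' : Finset V) : Prop :=
  ∀ a ∈ A', ∀ b ∈ A'', G.Adj a b

/-- Simplices of the box complex `B(G)`: sets `A' ⊎ A''` with `A'`, `A''` disjoint,
`G[A', A'']` complete and `CN(A') ≠ ∅ ≠ CN(A'')`. -/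
def BoxSimplex [Fintype V] (G : SimpleGraph V) (S : Finset (V × Bool)) : Prop :=
  Disjoint (shore S false) (shore S true) ∧
  IsCompleteBip G (shore S false) (shore S true) ∧
  (CN G (shore S false)).Nonempty ∧ (CN G (shore S true)).Nonempty

/-- Simplices of the box complex `B₀(G)`: sets `A' ⊎ A''` with `A'`, `A''` disjoint and
`G[A', A'']` complete. -/
def Box0Simplex (G : SimpleGraph V) (S : Finset (V × Bool)) : Prop :=
  Disjoint (shore S false) (shore S true) ∧
  IsCompleteBip G (shore S false) (shore S true)

/-- Vertices of `B₁(G)`: sets `A' ⊎ A''` with `A'`, `A''` nonempty, disjoint and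
`G[A', A'']` complete. -/
def B1Vertex (G : SimpleGraph V) (S : Finset (V × Bool)) : Prop :=
  (shore S false).Nonempty ∧ (shore S true).Nonempty ∧
  Disjoint (shore S false) (shore S true) ∧
  IsCompleteBip G (shore S false) (shore S true)

/-- Simplices of the order complex `B₁(G)`: chains of vertices of `B₁(G)` under inclusion. -/
def B1Simplex (G : SimpleGraph V) (C : Finset (Finset (V × Bool))) : Prop :=
  (∀ T ∈ C, B1Vertex G T) ∧ IsChain (· ⊆ ·) (C : Set (Finset (V × Bool)))

/-- Simplices of the barycentric subdivision `sd K` of the complex `K` whose simplices are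
given by the predicate `P`: chains of nonempty simplices of `K` under inclusion. -/
def sdSimplex {γ : Type*} (P : Finset γ → Prop) (C : Finset (Finset γ)) : Prop :=
  (∀ S ∈ C, P S ∧ S.Nonempty) ∧ IsChain (· ⊆ ·) (C : Set (Finset γ))

/-- The Kneser graph of a set system `𝓕`: the vertices are the members of `𝓕`,
and two (distinct) members are adjacent if and only if they are disjoint. -/
def KG {α : Type*} (𝓕 : Finset (Finset α)) : SimpleGraph {F // F ∈ 𝓕} where
  Adj A B := A ≠ B ∧ Disjoint A.1 B.1
  symm := ⟨fun A B h => ⟨h.1.symm, h.2.symm⟩⟩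
  loopless := ⟨fun A h => h.1 rfl⟩

/-- Vertices of `B_S(𝓕)` (Sarkaria's complex): sets `B' ⊎ B''` with `B', B'' ⊆ [n]`
disjoint such that at least one of `B'`, `B''` contains a member of `𝓕`. -/
def BSVertex (n : ℕ) (𝓕 : Finset (Finset ℕ)) (T : Finset (ℕ × Bool)) : Prop :=
  shore T false ⊆ Finset.Icc 1 n ∧ shore T true ⊆ Finset.Icc 1 n ∧
  Disjoint (shore T false) (shore T true) ∧
  ((∃ F ∈ 𝓕, F ⊆ shore T false) ∨ (∃ F ∈ 𝓕, F ⊆ shore T true))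

/-- Simplices of the order complex `B_S(𝓕)`: chains of its vertices under inclusion. -/
def BSSimplex (n : ℕ) (𝓕 : Finset (Finset ℕ)) (C : Finset (Finset (ℕ × Bool))) : Prop :=
  (∀ T ∈ C, BSVertex n 𝓕 T) ∧ IsChain (· ⊆ ·) (C : Set (Finset (ℕ × Bool)))

/-- The map `B' ⊎ B'' ↦ {F ∈ 𝓕 : F ⊆ B'} ⊎ {F ∈ 𝓕 : F ⊆ B''}`. -/
def toKneserSide (𝓕 : Finset (Finset ℕ)) (T : Finset (ℕ × Bool)) :
    Finset ({F // F ∈ 𝓕} × Bool) :=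
  joinPair (Finset.univ.filter fun F : {F // F ∈ 𝓕} => F.1 ⊆ shore T false)
           (Finset.univ.filter fun F : {F // F ∈ 𝓕} => F.1 ⊆ shore T true)

/-- The map `A' ⊎ A'' ↦ (⋃ A') ⊎ (⋃ A'')`. -/
def toGroundSide (𝓕 : Finset (Finset ℕ)) (T : Finset ({F // F ∈ 𝓕} × Bool)) :
    Finset (ℕ × Bool) :=
  joinPair ((shore T false).sup fun F => F.1) ((shore T true).sup fun F => F.1)

lemma mem_shore {S : Finset (V × Bool)} {x : V} {b : Bool} :
    x ∈ shore S b ↔ (x, b) ∈ S := by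
  simp [shore]

@[simp]
lemma shore_joinPair_false (A B : Finset V) : shore (joinPair A B) false = A := by
  ext x
  simp [mem_shore, joinPair]

@[simp]
lemma shore_joinPair_true (A B : Finset V) : shore (joinPair A B) true = B := by
  ext x
  simp [mem_shore, joinPair]

@[simp]
lemma shore_swapFinset (S : Finset (V × Bool)) (b : Bool) :
    shore (swapFinset S) b = shore S (!b) := by
  ext x
  simp [mem_shore, swapFinset]

lemma swapFinset_joinPair (A B : Finset V) : swapFinset (joinPair A B) = joinPair B A := by
  ext ⟨x, b⟩
  cases b <;> simp [swapFinset, joinPair]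

lemma shore_mono (b : Bool) : Monotone fun S : Finset (V × Bool) => shore S b :=
  fun _ _ h _ hx => mem_shore.2 (h (mem_shore.1 hx))

lemma joinPair_mono {A A' B B' : Finset V} (hA : A ⊆ A') (hB : B ⊆ B') :
    joinPair A B ⊆ joinPair A' B' :=
  union_subset_union (image_subset_image hA) (image_subset_image hB)

section Kneser

variable (𝓕 : Finset (Finset ℕ))

lemma shore_toKneserSide (T : Finset (ℕ × Bool)) (b : Bool) :
    shore (toKneserSide 𝓕 T) b = univ.filter fun F : {F // F ∈ 𝓕} => F.1 ⊆ shore T b := by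
  cases b <;> simp [toKneserSide]

lemma toKneserSide_mono : Monotone (toKneserSide 𝓕) := fun _ _ h =>
  joinPair_mono (monotone_filter_right _ fun _ _ hF => hF.trans (shore_mono false h))
    (monotone_filter_right _ fun _ _ hF => hF.trans (shore_mono true h))

lemma toKneserSide_swapFinset (T : Finset (ℕ × Bool)) :
    toKneserSide 𝓕 (swapFinset T) = swapFinset (toKneserSide 𝓕 T) := by
  simp only [toKneserSide, shore_swapFinset, Bool.not_false, Bool.not_true, swapFinset_joinPair]

lemma box0Simplex_toKneserSide (h𝓕 : ∀ F ∈ 𝓕, F.Nonempty) {T : Finset (ℕ × Bool)}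
    (hT : Disjoint (shore T false) (shore T true)) :
    Box0Simplex (KG 𝓕) (toKneserSide 𝓕 T) := by
  have hdisj : ∀ F G : {F // F ∈ 𝓕}, F.1 ⊆ shore T false → G.1 ⊆ shore T true →
      Disjoint F.1 G.1 := fun _ _ hF hG => hT.mono hF hG
  simp only [Box0Simplex, IsCompleteBip, shore_toKneserSide, disjoint_filter, mem_filter,
    mem_univ, true_and]
  refine ⟨fun F _ hF hF' => ?_, fun F hF G hG => ⟨?_, hdisj F G hF hG⟩⟩
  · exact (h𝓕 F.1 F.2).ne_empty (disjoint_self.1 (hdisj F F hF hF'))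
  · rintro rfl
    exact (h𝓕 F.1 F.2).ne_empty (disjoint_self.1 (hdisj F F hF hG))

lemma toKneserSide_nonempty {T : Finset (ℕ × Bool)}
    (hT : (∃ F ∈ 𝓕, F ⊆ shore T false) ∨ (∃ F ∈ 𝓕, F ⊆ shore T true)) :
    (toKneserSide 𝓕 T).Nonempty := by
  rcases hT with ⟨F, hF, hFT⟩ | ⟨F, hF, hFT⟩
  · exact ⟨(⟨F, hF⟩, false), by simp [toKneserSide, joinPair, hFT]⟩
  · exact ⟨(⟨F, hF⟩, true), by simp [toKneserSide, joinPair, hFT]⟩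

lemma shore_toGroundSide (T : Finset ({F // F ∈ 𝓕} × Bool)) (b : Bool) :
    shore (toGroundSide 𝓕 T) b = (shore T b).sup Subtype.val := by
  cases b <;> simp [toGroundSide]

lemma toGroundSide_mono : Monotone (toGroundSide 𝓕) := fun _ _ h =>
  joinPair_mono (sup_mono (shore_mono false h)) (sup_mono (shore_mono true h))

lemma toGroundSide_swapFinset (T : Finset ({F // F ∈ 𝓕} × Bool)) :
    toGroundSide 𝓕 (swapFinset T) = swapFinset (toGroundSide 𝓕 T) := by
  simp only [toGroundSide, shore_swapFinset, Bool.not_false, Bool.not_true, swapFinset_joinPair]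

lemma bsVertex_toGroundSide {n : ℕ} (h𝓕 : ∀ F ∈ 𝓕, F ⊆ Icc 1 n)
    {T : Finset ({F // F ∈ 𝓕} × Bool)} (hT : Box0Simplex (KG 𝓕) T) (hne : T.Nonempty) :
    BSVertex n 𝓕 (toGroundSide 𝓕 T) := by
  obtain ⟨-, hcomplete⟩ := hT
  have hground (b : Bool) : (shore T b).sup Subtype.val ⊆ Icc 1 n :=
    Finset.sup_le fun F _ => h𝓕 F.1 F.2
  have hsides :
      Disjoint ((shore T false).sup Subtype.val) ((shore T true).sup Subtype.val) :=
    Finset.disjoint_sup_left.2 fun F hF =>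
      Finset.disjoint_sup_right.2 fun G hG => (hcomplete F hF G hG).2
  obtain ⟨⟨F, b⟩, hFb⟩ := hne
  have hF : F.1 ⊆ (shore T b).sup Subtype.val := le_sup (f := Subtype.val) (mem_shore.2 hFb)
  simp only [BSVertex, shore_toGroundSide]
  refine ⟨hground false, hground true, hsides, ?_⟩
  cases b
  · exact Or.inl ⟨F.1, F.2, hF⟩
  · exact Or.inr ⟨F.1, F.2, hF⟩

end Kneser

/-- For `G = KG(𝓕)`: (a) `B' ⊎ B'' ↦ {F ∈ 𝓕 : F ⊆ B'} ⊎ {F ∈ 𝓕 : F ⊆ B''}` is a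
simplicial ℤ₂-map `B_S(𝓕) → sd B₀(G)`; (b) `A' ⊎ A'' ↦ (⋃A') ⊎ (⋃A'')` is a simplicial
ℤ₂-map `sd B₀(G) → B_S(𝓕)`. -/
theorem BS_iso_sd_B0_kneser (n : ℕ) (𝓕 : Finset (Finset ℕ))
    (h𝓕 : ∀ F ∈ 𝓕, F ⊆ Finset.Icc 1 n ∧ F.Nonempty) :
    -- (a)
    ((∀ C : Finset (Finset (ℕ × Bool)), BSSimplex n 𝓕 C →
        sdSimplex (Box0Simplex (KG 𝓕)) (C.image (toKneserSide 𝓕))) ∧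
      (∀ T : Finset (ℕ × Bool), BSVertex n 𝓕 T →
        toKneserSide 𝓕 (swapFinset T) = swapFinset (toKneserSide 𝓕 T))) ∧
    -- (b)
    ((∀ C : Finset (Finset ({F // F ∈ 𝓕} × Bool)), sdSimplex (Box0Simplex (KG 𝓕)) C →
        BSSimplex n 𝓕 (C.image (toGroundSide 𝓕))) ∧
      (∀ T : Finset ({F // F ∈ 𝓕} × Bool), Box0Simplex (KG 𝓕) T → T.Nonempty →
        toGroundSide 𝓕 (swapFinset T) = swapFinset (toGroundSide 𝓕 T))) := by
  refine ⟨⟨fun C ⟨hvert, hchain⟩ => ⟨?_, ?_⟩, fun T _ => toKneserSide_swapFinset 𝓕 T⟩,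
    ⟨fun C ⟨hsimp, hchain⟩ => ⟨?_, ?_⟩, fun T _ _ => toGroundSide_swapFinset 𝓕 T⟩⟩
  · simp only [mem_image, forall_exists_index, and_imp, forall_apply_eq_imp_iff₂]
    intro T hT
    obtain ⟨-, -, hdisj, hmember⟩ := hvert T hT
    exact ⟨box0Simplex_toKneserSide 𝓕 (fun F hF => (h𝓕 F hF).2) hdisj,
      toKneserSide_nonempty 𝓕 hmember⟩
  · rw [coe_image]
    exact (toKneserSide_mono 𝓕).isChain_image hchain
  · simp only [mem_image, forall_exists_index, and_imp, forall_apply_eq_imp_iff₂]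
    intro T hT
    exact bsVertex_toGroundSide 𝓕 (fun F hF => (h𝓕 F hF).1) (hsimp T hT).1 (hsimp T hT).2
  · rw [coe_image]
    exact (toGroundSide_mono 𝓕).isChain_image hchain
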